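/- arXiv:math/0604356 — 2 statements merged into one kernel-verified Lean document; each statement's English description precedes it below -/
import Mathlib

section
/- Let n and k be integers with 0 < k < n, and let α and β be sequences in Z_n with |α| + |β| = n − 1 + k, L(α) < n and L(1 − β) < n. Then k ≤ |α| < n, k ≤ |β| < n, and v(b) − v(a) ≥ k for every term a of α and every term b of β; in particular a ≠ b for all a ∈ α and b ∈ β. -/
def lpr {n : ℕ} (a : ZMod n) : ℕ := if a = 0 then n else ZMod.val a

def Lsum {n : ℕ} (α : Multiset (ZMod n)) : ℕ := (α.map lpr).sum

section aux
variable {n : ℕ} [NeZero n]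

lemma lpr_pos (a : ZMod n) : 1 ≤ lpr a := by
  unfold lpr
  split
  · exact Nat.one_le_iff_ne_zero.mpr (NeZero.ne n)
  · rename_i h
    exact Nat.one_le_iff_ne_zero.mpr (fun h0 => h ((ZMod.val_eq_zero a).mp h0))

lemma lpr_le (a : ZMod n) : lpr a ≤ n := by
  unfold lpr
  split
  · exact le_rfl
  · exact (ZMod.val_lt a).le

lemma lpr_cast (a : ZMod n) : ((lpr a : ℕ) : ZMod n) = a := by
  unfold lpr
  split
  · rename_i h; simp [h]
  · simp [ZMod.natCast_val, ZMod.cast_id]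

lemma card_le_Lsum (α : Multiset (ZMod n)) : Multiset.card α ≤ Lsum α := by
  induction α using Multiset.induction with
  | empty => simp [Lsum]
  | cons a s ih =>
    have := lpr_pos a
    simp only [Lsum, Multiset.map_cons, Multiset.sum_cons, Multiset.card_cons]
    have : Multiset.card s ≤ (s.map lpr).sum := ih
    omega

lemma lpr_add (b : ZMod n) (hn : 1 < n) : lpr (1 - b) + lpr b = n + 1 := by
  have hc : ((lpr (1 - b) + lpr b : ℕ) : ZMod n) = ((1 : ℕ) : ZMod n) := by
    push_cast [lpr_cast]; ring
  have hmod : (lpr (1 - b) + lpr b) % n = 1 % n :=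
    (ZMod.natCast_eq_natCast_iff' _ _ _).mp hc
  have h1 : 1 % n = 1 := Nat.mod_eq_of_lt hn
  have h2 : 1 ≤ lpr (1 - b) := lpr_pos _
  have h3 : 1 ≤ lpr b := lpr_pos _
  have h4 : lpr (1 - b) ≤ n := lpr_le _
  have h5 : lpr b ≤ n := lpr_le _
  have hd : n ∣ (lpr (1 - b) + lpr b - 1) :=
    (Nat.modEq_iff_dvd' (by omega)).mp hmod.symm
  rcases hd with ⟨c, hc2⟩
  have hc1 : c ≤ 1 := by
    by_contra hcg
    have : n * 2 ≤ n * c := Nat.mul_le_mul_left n (by omega)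
    omega
  interval_cases c <;> omega

lemma lpr_mem (α : Multiset (ZMod n)) (a : ZMod n) (ha : a ∈ α) :
    lpr a + Multiset.card α ≤ Lsum α + 1 := by
  have h1 : Lsum α = lpr a + Lsum (α.erase a) := by
    conv_lhs => rw [← Multiset.cons_erase ha]
    simp [Lsum]
  have h2 : Multiset.card (α.erase a) ≤ Lsum (α.erase a) := card_le_Lsum _
  have h3 : Multiset.card (α.erase a) + 1 = Multiset.card α := by
    have h := Multiset.card_erase_of_mem ha
    rw [Nat.pred_eq_sub_one] at h
    have hpos : 0 < Multiset.card α := Multiset.card_pos_iff_exists_mem.mpr ⟨a, ha⟩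
    omega
  omega

end aux

/-- If `|α| + |β| = n − 1 + k` with `0 < k < n`, `L(α) < n` and `L(1 − β) < n`, then
`k ≤ |α| < n`, `k ≤ |β| < n`, and `v(b) − v(a) ≥ k` for all `a ∈ α`, `b ∈ β`;
in particular `a ≠ b` for all `a ∈ α`, `b ∈ β`. -/
theorem separable_lengths_and_gap (n k : ℕ) (hk : 0 < k) (hkn : k < n)
    (α β : Multiset (ZMod n))
    (hlen : Multiset.card α + Multiset.card β = n - 1 + k)
    (hα : Lsum α < n) (hβ : Lsum (β.map (fun b => 1 - b)) < n) :
    k ≤ Multiset.card α ∧ Multiset.card α < n ∧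
    k ≤ Multiset.card β ∧ Multiset.card β < n ∧
    (∀ a ∈ α, ∀ b ∈ β, (k : ℤ) ≤ (lpr b : ℤ) - (lpr a : ℤ)) ∧
    (∀ a ∈ α, ∀ b ∈ β, a ≠ b) := by
  have hn : 1 < n := by omega
  have : NeZero n := ⟨by omega⟩
  have hcα : Multiset.card α ≤ Lsum α := card_le_Lsum α
  have hcβ : Multiset.card β ≤ Lsum (β.map (fun b => 1 - b)) := by
    have := card_le_Lsum (β.map (fun b => 1 - b))
    simpa using this
  have key : ∀ a ∈ α, ∀ b ∈ β, (k : ℤ) ≤ (lpr b : ℤ) - (lpr a : ℤ) := by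
    intro a ha b hb
    have h1 := lpr_mem α a ha
    have h2 := lpr_mem (β.map (fun b => 1 - b)) (1 - b)
      (Multiset.mem_map.mpr ⟨b, hb, rfl⟩)
    have h3 := lpr_add b hn
    have h4 : Multiset.card (β.map (fun b => 1 - b)) = Multiset.card β := by simp
    rw [h4] at h2
    omega
  refine ⟨by omega, by omega, by omega, by omega, key, ?_⟩
  intro a ha b hb hab
  have := key a ha b hb
  subst hab
  omega
end

section
/- Let n and k be integers with 0 < k < n, and let α and β be sequences in Z_n with |α| + |β| = n − 1 + k, L(α) < n and L(1 − β) < n. Let u and v denote the multiplicities of the elements 1 and 0, respectively, in the union α ∪ β. Then u + v ≥ 2k, max(u, v) ≥ k, and min(u, v) ≥ 2k − n + 1. -/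
lemma one_le_lpr {n : ℕ} (hn : 0 < n) (a : ZMod n) : 1 ≤ lpr a := by
  haveI : NeZero n := ⟨hn.ne'⟩
  unfold lpr
  split
  · omega
  · rename_i h
    have := (ZMod.val_eq_zero a).not.mpr h
    omega

lemma two_le_lpr {n : ℕ} (hn : 2 ≤ n) {a : ZMod n} (ha : a ≠ 1) : 2 ≤ lpr a := by
  haveI : NeZero n := ⟨by omega⟩
  unfold lpr
  split
  · omega
  · rename_i h
    have h0 := (ZMod.val_eq_zero a).not.mpr h
    have h1 : a.val ≠ 1 := by
      intro hv
      apply ha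
      haveI : Fact (1 < n) := ⟨by omega⟩
      have : a.val = (1 : ZMod n).val := by rw [hv, ZMod.val_one]
      exact ZMod.val_injective n this
    omega

lemma lsum_bounds {n : ℕ} (hn : 2 ≤ n) (α : Multiset (ZMod n)) :
    Multiset.card α ≤ Lsum α ∧ 2 * Multiset.card α ≤ Lsum α + α.count 1 := by
  induction α using Multiset.induction with
  | empty => simp [Lsum]
  | cons a s ih =>
    have hL : Lsum (a ::ₘ s) = lpr a + Lsum s := by
      simp [Lsum]
    have h1 := one_le_lpr (by omega : 0 < n) a
    rw [Multiset.count_cons]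
    by_cases ha : a = 1
    · subst ha
      haveI : Fact (1 < n) := ⟨by omega⟩
      have hl1 : lpr (1 : ZMod n) = 1 := by
        unfold lpr
        rw [if_neg one_ne_zero, ZMod.val_one]
      simp [hL, hl1]
      omega
    · have h2 := two_le_lpr hn ha
      simp [ha, hL]
      omega

/-- If `|α| + |β| = n − 1 + k` with `0 < k < n`, `L(α) < n` and `L(1 − β) < n`, and
`u`, `v` are the multiplicities of `1` and `0` in `α ∪ β`, then `u + v ≥ 2k`,
`max(u,v) ≥ k` and `min(u,v) ≥ 2k − n + 1`. -/
theorem separable_multiplicities (n k : ℕ) (hk : 0 < k) (hkn : k < n)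
    (α β : Multiset (ZMod n))
    (hlen : Multiset.card α + Multiset.card β = n - 1 + k)
    (hα : Lsum α < n) (hβ : Lsum (β.map (fun b => 1 - b)) < n)
    (u v : ℕ) (hu : u = (α + β).count 1) (hv : v = (α + β).count 0) :
    2 * k ≤ u + v ∧ k ≤ max u v ∧ 2 * (k : ℤ) - n + 1 ≤ (min u v : ℤ) := by
  have hn2 : 2 ≤ n := by omega
  obtain ⟨hA1, hA2⟩ := lsum_bounds hn2 α
  obtain ⟨hB1, hB2⟩ := lsum_bounds hn2 (β.map (fun b => 1 - b))
  have hinj : Function.Injective (fun b : ZMod n => 1 - b) := by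
    intro x y h
    simpa using sub_right_injective h
  have hcount : (β.map (fun b : ZMod n => 1 - b)).count 1 = β.count 0 := by
    have := Multiset.count_map_eq_count' _ β hinj 0
    simpa using this
  rw [Multiset.card_map] at hB1 hB2
  rw [hcount] at hB2
  rw [Multiset.count_add] at hu hv
  have hu' : α.count 1 ≤ u := by omega
  have hv' : β.count 0 ≤ v := by omega
  refine ⟨by omega, by omega, ?_⟩
  rw [le_min_iff]
  constructor <;> push_cast <;> omega
end
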